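/- Let L > 0, let γ, T, N : ℝ → ℝ² be smooth L-periodic maps and κ : ℝ → ℝ a smooth L-periodic function with κ(σ) > 0 for all σ, satisfying γ'(σ) = T(σ), N'(σ) = −κ(σ)·T(σ), and T(σ) ∧ N(σ) = 1 for all σ. Then for every smooth L-periodic function φ : ℝ → ℝ, 𝒜(γ + φ·N) ≥ 𝒜(γ) − (1/2)∫₀ᴸ κ(σ)⁻¹ dσ, with equality if and only if φ = κ⁻¹, i.e. if and only if γ + φN is the Minkowski evolute e := γ + κ⁻¹·N. -/

import Mathlib

/-- The wedge product `(a,b) ∧ (c,d) = ad − bc` of two plane vectors. -/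
def wedge (v w : ℝ × ℝ) : ℝ := v.1 * w.2 - v.2 * w.1

/-- The signed Euclidean area `𝒜(c) = (1/2)∫₀ᴸ c ∧ c' dσ` of an `L`-periodic plane curve. -/
noncomputable def signedArea (L : ℝ) (c : ℝ → ℝ × ℝ) : ℝ :=
  (1 / 2) * ∫ σ in (0:ℝ)..L, wedge (c σ) (deriv c σ)

theorem signedArea_minkowski_normal_graph_lower_bound (L : ℝ) (hL : 0 < L)
    (γ T N : ℝ → ℝ × ℝ) (κ : ℝ → ℝ)
    (hγ : ContDiff ℝ (⊤ : ℕ∞) γ) (hT : ContDiff ℝ (⊤ : ℕ∞) T) (hN : ContDiff ℝ (⊤ : ℕ∞) N)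
    (hκ : ContDiff ℝ (⊤ : ℕ∞) κ)
    (hγp : Function.Periodic γ L) (hTp : Function.Periodic T L)
    (hNp : Function.Periodic N L) (hκp : Function.Periodic κ L)
    (hκpos : ∀ σ, 0 < κ σ)
    (hγ' : ∀ σ, deriv γ σ = T σ)
    (hN' : ∀ σ, deriv N σ = -(κ σ) • T σ)
    (hTN : ∀ σ, wedge (T σ) (N σ) = 1)
    (φ : ℝ → ℝ) (hφ : ContDiff ℝ (⊤ : ℕ∞) φ) (hφp : Function.Periodic φ L) :
    signedArea L (fun σ => γ σ + φ σ • N σ)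
      ≥ signedArea L γ - (1 / 2) * (∫ σ in (0:ℝ)..L, (κ σ)⁻¹) ∧
    (signedArea L (fun σ => γ σ + φ σ • N σ)
        = signedArea L γ - (1 / 2) * (∫ σ in (0:ℝ)..L, (κ σ)⁻¹)
      ↔ ∀ σ, φ σ = (κ σ)⁻¹) := by
  set c : ℝ → ℝ × ℝ := fun σ => γ σ + φ σ • N σ with hc_def
  set h : ℝ → ℝ := fun σ => φ σ * wedge (γ σ) (N σ) with hh_def
  set q : ℝ → ℝ := fun σ => κ σ * (φ σ - (κ σ)⁻¹) ^ 2 with hq_def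
  -- basic differentiability facts
  have hγd : ∀ σ, HasDerivAt γ (T σ) σ := fun σ => by
    have := (hγ.differentiable (by simp) σ).hasDerivAt
    rwa [hγ' σ] at this
  have hNd : ∀ σ, HasDerivAt N (-(κ σ) • T σ) σ := fun σ => by
    have := (hN.differentiable (by simp) σ).hasDerivAt
    rwa [hN' σ] at this
  have hφd : ∀ σ, HasDerivAt φ (deriv φ σ) σ :=
    fun σ => (hφ.differentiable (by simp) σ).hasDerivAt
  have hcd : ∀ σ, HasDerivAt c (T σ + (deriv φ σ • N σ + φ σ • (-(κ σ) • T σ))) σ := by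
    intro σ
    have := (hγd σ).add (((hφd σ).smul (hNd σ)))
    refine this.congr_deriv ?_
    abel
  have hhd : ∀ σ, HasDerivAt h
      (deriv φ σ * wedge (γ σ) (N σ) +
        φ σ * (wedge (T σ) (N σ) + wedge (γ σ) (-(κ σ) • T σ))) σ := by
    intro σ
    have h1 : HasDerivAt (fun σ => (γ σ).1) (T σ).1 σ := (hγd σ).fst
    have h2 : HasDerivAt (fun σ => (γ σ).2) (T σ).2 σ := (hγd σ).snd
    have h3 : HasDerivAt (fun σ => (N σ).1) ((-(κ σ) • T σ) : ℝ × ℝ).1 σ := (hNd σ).fst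
    have h4 : HasDerivAt (fun σ => (N σ).2) ((-(κ σ) • T σ) : ℝ × ℝ).2 σ := (hNd σ).snd
    have hw : HasDerivAt (fun σ => wedge (γ σ) (N σ))
        (wedge (T σ) (N σ) + wedge (γ σ) (-(κ σ) • T σ)) σ := by
      have := (h1.mul h4).sub (h2.mul h3)
      refine this.congr_deriv ?_
      simp [wedge]; ring
    exact (hφd σ).mul hw
  -- pointwise identity
  have key : ∀ σ, wedge (c σ) (deriv c σ)
      = wedge (γ σ) (deriv γ σ) - (κ σ)⁻¹ + q σ + deriv h σ := by
    intro σ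
    have hκne : κ σ ≠ 0 := (hκpos σ).ne'
    have hTNσ : (T σ).1 * (N σ).2 - (T σ).2 * (N σ).1 = 1 := hTN σ
    have hinv : κ σ * (κ σ)⁻¹ = 1 := mul_inv_cancel₀ hκne
    rw [(hcd σ).deriv, (hhd σ).deriv, hγ' σ]
    simp only [hq_def, hc_def, wedge, Prod.fst_add, Prod.snd_add, Prod.smul_fst, Prod.smul_snd,
      smul_eq_mul]
    linear_combination ((φ σ)^2 * κ σ - 2 * φ σ) * hTNσ +
      (2 * φ σ - (κ σ)⁻¹ * (1 + κ σ * (κ σ)⁻¹) + κ σ * (κ σ)⁻¹^2) * hinv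
  -- continuity facts
  have hcC : ContDiff ℝ (⊤ : ℕ∞) c := hγ.add (hφ.smul hN)
  have hγ1 : ContDiff ℝ (⊤ : ℕ∞) (fun σ => (γ σ).1) := contDiff_fst.comp hγ
  have hγ2 : ContDiff ℝ (⊤ : ℕ∞) (fun σ => (γ σ).2) := contDiff_snd.comp hγ
  have hN1 : ContDiff ℝ (⊤ : ℕ∞) (fun σ => (N σ).1) := contDiff_fst.comp hN
  have hN2 : ContDiff ℝ (⊤ : ℕ∞) (fun σ => (N σ).2) := contDiff_snd.comp hN
  have hhC : ContDiff ℝ (⊤ : ℕ∞) h := hφ.mul ((hγ1.mul hN2).sub (hγ2.mul hN1))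
  have hwedgeC : ∀ (f g : ℝ → ℝ × ℝ), Continuous f → Continuous g →
      Continuous (fun σ => wedge (f σ) (g σ)) := by
    intro f g hf hg
    unfold wedge
    fun_prop
  have hfC : Continuous (fun σ => wedge (c σ) (deriv c σ)) :=
    hwedgeC _ _ hcC.continuous (hcC.continuous_deriv (by simp))
  have hgC : Continuous (fun σ => wedge (γ σ) (deriv γ σ)) := by
    have : (fun σ => wedge (γ σ) (deriv γ σ)) = fun σ => wedge (γ σ) (T σ) := by
      funext σ; rw [hγ' σ]
    rw [this]
    exact hwedgeC _ _ hγ.continuous hT.continuous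
  have hκinvC : Continuous (fun σ => (κ σ)⁻¹) :=
    hκ.continuous.inv₀ (fun σ => (hκpos σ).ne')
  have hqC : Continuous q := by
    apply hκ.continuous.mul
    exact ((hφ.continuous.sub hκinvC).pow 2)
  have hq0 : ∀ σ, 0 ≤ q σ := fun σ => by
    have hq : q σ = κ σ * (φ σ - (κ σ)⁻¹) ^ 2 := rfl
    have := (hκpos σ).le
    rw [hq]; positivity
  -- integral of deriv h is zero
  have hint_h : (∫ σ in (0:ℝ)..L, deriv h σ) = 0 := by
    rw [intervalIntegral.integral_deriv_eq_sub
      (fun σ _ => (hhC.differentiable (by simp) σ))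
      ((hhC.continuous_deriv (by simp)).intervalIntegrable 0 L)]
    have hφL : φ L = φ 0 := by have := hφp 0; rwa [zero_add] at this
    have hγL : γ L = γ 0 := by have := hγp 0; rwa [zero_add] at this
    have hNL : N L = N 0 := by have := hNp 0; rwa [zero_add] at this
    have : h L = h 0 := by
      show φ L * wedge (γ L) (N L) = φ 0 * wedge (γ 0) (N 0)
      rw [hφL, hγL, hNL]
    rw [this, sub_self]
  -- split the integral
  have hsplit : (∫ σ in (0:ℝ)..L, wedge (c σ) (deriv c σ))
      = (∫ σ in (0:ℝ)..L, wedge (γ σ) (deriv γ σ)) - (∫ σ in (0:ℝ)..L, (κ σ)⁻¹)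
        + (∫ σ in (0:ℝ)..L, q σ) := by
    have h1 : (∫ σ in (0:ℝ)..L, wedge (c σ) (deriv c σ))
        = ∫ σ in (0:ℝ)..L,
          (wedge (γ σ) (deriv γ σ) - (κ σ)⁻¹ + q σ + deriv h σ) := by
      apply intervalIntegral.integral_congr
      intro σ _
      exact key σ
    rw [h1]
    rw [intervalIntegral.integral_add (f := fun σ => wedge (γ σ) (deriv γ σ) - (κ σ)⁻¹ + q σ)
      (g := fun σ => deriv h σ)
      (((hgC.sub hκinvC).add hqC).intervalIntegrable 0 L)
      ((hhC.continuous_deriv (by simp)).intervalIntegrable 0 L),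
      hint_h, add_zero,
      intervalIntegral.integral_add (f := fun σ => wedge (γ σ) (deriv γ σ) - (κ σ)⁻¹)
        (g := fun σ => q σ) ((hgC.sub hκinvC).intervalIntegrable 0 L)
        (hqC.intervalIntegrable 0 L),
      intervalIntegral.integral_sub (f := fun σ => wedge (γ σ) (deriv γ σ))
        (g := fun σ => (κ σ)⁻¹) (hgC.intervalIntegrable 0 L)
        (hκinvC.intervalIntegrable 0 L)]
  set Q : ℝ := ∫ σ in (0:ℝ)..L, q σ with hQ_def
  have hQnn : 0 ≤ Q :=
    intervalIntegral.integral_nonneg hL.le (fun σ _ => hq0 σ)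
  have hmain : signedArea L c
      = signedArea L γ - (1 / 2) * (∫ σ in (0:ℝ)..L, (κ σ)⁻¹) + (1 / 2) * Q := by
    simp only [signedArea, hsplit]
    ring
  constructor
  · rw [hmain]; linarith
  · rw [hmain]
    constructor
    · intro heq
      have hQ0 : Q = 0 := by linarith
      -- q vanishes on Ioc 0 L
      have hq_ae : q =ᵐ[MeasureTheory.volume.restrict (Set.Ioc (0:ℝ) L)] 0 := by
        rw [← intervalIntegral.integral_eq_zero_iff_of_le_of_nonneg_ae hL.le
          (Filter.Eventually.of_forall (fun σ => hq0 σ))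
          (hqC.intervalIntegrable 0 L)]
        exact hQ0
      have hqzero : Set.EqOn q 0 (Set.Ioc 0 L) := by
        apply MeasureTheory.Measure.eqOn_of_ae_eq hq_ae hqC.continuousOn
          continuousOn_const
        rw [interior_Ioc, closure_Ioo hL.ne]
        exact Set.Ioc_subset_Icc_self
      have hφκ : ∀ σ ∈ Set.Ioc (0:ℝ) L, φ σ = (κ σ)⁻¹ := by
        intro σ hσ
        have := hqzero hσ
        simp only [hq_def, Pi.zero_apply] at this
        have h2 : (φ σ - (κ σ)⁻¹) ^ 2 = 0 := by
          rcases mul_eq_zero.1 this with h | h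
          · exact absurd h (hκpos σ).ne'
          · exact h
        have := pow_eq_zero_iff (two_ne_zero) |>.1 h2
        linarith
      -- extend by periodicity
      intro σ
      set ψ : ℝ → ℝ := fun σ => φ σ - (κ σ)⁻¹ with hψ_def
      have hψp : Function.Periodic ψ L := by
        intro x
        simp only [hψ_def, hφp x, hκp x]
      have hψIoc : ∀ τ ∈ Set.Ioc (0:ℝ) L, ψ τ = 0 := by
        intro τ hτ
        simp only [hψ_def]
        rw [hφκ τ hτ]; ring
      obtain ⟨y, hy, hxy⟩ := hψp.exists_mem_Ico₀ hL σ
      have hψy : ψ y = 0 := by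
        rcases eq_or_lt_of_le hy.1 with h0 | h0
        · have : ψ y = ψ L := by
            rw [← h0]
            have := hψp 0
            rw [zero_add] at this
            exact this.symm
          rw [this]
          exact hψIoc L ⟨hL, le_refl L⟩
        · exact hψIoc y ⟨h0, hy.2.le⟩
      have : ψ σ = 0 := by rw [hxy, hψy]
      simp only [hψ_def] at this
      linarith
    · intro hφκ
      have : Q = 0 := by
        rw [hQ_def]
        have : ∀ σ, q σ = 0 := by
          intro σ
          simp only [hq_def, hφκ σ]
          ring
        simp only [this]
        simp
      rw [this]; ring
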